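/- arXiv:2112.15596 — 5 statements merged into one kernel-verified Lean document; each statement's English description precedes it below -/
import Mathlib

section
/- The function b_n is strongly monotonic with the same constant L as b, i.e. ⟨b_n(x) − b_n(y), x − y⟩ ≤ −L‖x − y‖² for all x, y ∈ ℝ^d. -/
open scoped RealInnerProductSpace

private lemma clamp_nonneg (s : ℝ) : 0 ≤ max 0 (min 1 s) := le_max_left _ _

private lemma clamp_le_one (s : ℝ) : max 0 (min 1 s) ≤ 1 :=
  max_le zero_le_one (min_le_left _ _)

private lemma clamp_mono {s t : ℝ} (h : s ≤ t) :
    max 0 (min 1 s) ≤ max 0 (min 1 t) :=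
  max_le_max le_rfl (min_le_min le_rfl h)

private lemma clamp_lip {s t : ℝ} (h : s ≤ t) :
    max 0 (min 1 t) - max 0 (min 1 s) ≤ t - s := by
  simp only [max_def, min_def]
  split_ifs <;> linarith

set_option maxHeartbeats 1000000 in
theorem bn_strongly_monotonic
    {{d : ℕ}} (hd : 1 ≤ d)
    (b : EuclideanSpace ℝ (Fin d) → EuclideanSpace ℝ (Fin d)) (L : ℝ)
    (hb : Continuous b) (hL : 0 < L)
    (hmono : ∀ x y : EuclideanSpace ℝ (Fin d),
      ⟪b x - b y, x - y⟫ ≤ -L * ‖x - y‖ ^ 2)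
    (f : EuclideanSpace ℝ (Fin d) → EuclideanSpace ℝ (Fin d))
    (hf : ∀ x, f x = b 0 - b x - L • x)
    (α : ℝ) (hα : α ∈ Set.Ioc (0 : ℝ) (1 / 2)) (n : ℕ) (hn : 1 ≤ n)
    (sn : ℝ)
    (hsn : sn = sInf {r : ℝ | 0 ≤ r ∧
      ∃ x : EuclideanSpace ℝ (Fin d), ‖x‖ = r ∧ ‖f x‖ = (n : ℝ) ^ α})
    (hsn2 : 2 < sn)
    (tn rn : EuclideanSpace ℝ (Fin d) → ℝ)
    (htn1 : ∀ x : EuclideanSpace ℝ (Fin d), ‖x‖ ≤ sn - 1 → tn x = 1)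
    (htn2 : ∀ x : EuclideanSpace ℝ (Fin d), sn - 1 < ‖x‖ → ‖x‖ < sn → tn x = sn - ‖x‖)
    (htn3 : ∀ x : EuclideanSpace ℝ (Fin d), sn ≤ ‖x‖ → tn x = 0)
    (hrn1 : ∀ x : EuclideanSpace ℝ (Fin d), ‖x‖ ≤ sn - 2 → rn x = 0)
    (hrn2 : ∀ x : EuclideanSpace ℝ (Fin d), sn - 2 < ‖x‖ → ‖x‖ < sn - 1 → rn x = ‖x‖ - sn + 2)
    (hrn3 : ∀ x : EuclideanSpace ℝ (Fin d), sn - 1 ≤ ‖x‖ → rn x = 1)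
    (fn bn : EuclideanSpace ℝ (Fin d) → EuclideanSpace ℝ (Fin d))
    (hfn : ∀ x, fn x = tn x • f x + ((n : ℝ) ^ α * rn x) • x)
    (hbn : ∀ x, bn x = b 0 - L • x - fn x) :
    ∀ x y : EuclideanSpace ℝ (Fin d), ⟪bn x - bn y, x - y⟫ ≤ -L * ‖x - y‖ ^ 2 := by
  set N : ℝ := (n : ℝ) ^ α with hN
  have hNpos : 0 < N := by
    have hn0 : (0:ℝ) < (n:ℝ) := by exact_mod_cast Nat.lt_of_lt_of_le Nat.zero_lt_one hn
    positivity
  -- f vanishes at 0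
  have hf0 : f 0 = 0 := by
    rw [hf]; simp
  -- f is monotone
  have hfmono : ∀ x y : EuclideanSpace ℝ (Fin d), 0 ≤ ⟪f x - f y, x - y⟫ := by
    intro x y
    have h1 := hmono x y
    have h2 : f x - f y = -(b x - b y) - L • (x - y) := by
      rw [hf, hf]; module
    rw [h2, inner_sub_left, inner_neg_left, real_inner_smul_left,
      real_inner_self_eq_norm_sq]
    nlinarith [h1]
  have hfyy : ∀ y : EuclideanSpace ℝ (Fin d), 0 ≤ ⟪f y, y⟫ := by
    intro y
    have := hfmono y 0
    simpa [hf0] using this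
  -- continuity of f
  have hfc : Continuous f := by
    have hfe : f = fun x => b 0 - b x - L • x := funext hf
    rw [hfe]
    exact (continuous_const.sub hb).sub (continuous_id.const_smul L)
  -- key: inside radius sn, ‖f y‖ ≤ N
  have hkey : ∀ y : EuclideanSpace ℝ (Fin d), ‖y‖ < sn → ‖f y‖ ≤ N := by
    intro y hy
    by_contra hlt
    push_neg at hlt
    set g : ℝ → ℝ := fun t => ‖f (t • y)‖ with hg
    have hgc : Continuous g := hfc.comp (continuous_id.smul continuous_const) |>.norm
    have hg0 : g 0 = 0 := by simp [hg, hf0]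
    have hg1 : g 1 = ‖f y‖ := by simp [hg]
    have hmem : N ∈ Set.Icc (g 0) (g 1) := by
      constructor
      · rw [hg0]; exact hNpos.le
      · rw [hg1]; exact hlt.le
    have := intermediate_value_Icc (by norm_num : (0:ℝ) ≤ 1) hgc.continuousOn hmem
    obtain ⟨t, ht, hgt⟩ := this
    have hr : ‖t • y‖ ∈ {r : ℝ | 0 ≤ r ∧
        ∃ x : EuclideanSpace ℝ (Fin d), ‖x‖ = r ∧ ‖f x‖ = N} := by
      exact ⟨norm_nonneg _, ⟨t • y, rfl, hgt⟩⟩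
    have hbdd : BddBelow {r : ℝ | 0 ≤ r ∧
        ∃ x : EuclideanSpace ℝ (Fin d), ‖x‖ = r ∧ ‖f x‖ = N} :=
      ⟨0, fun r hr => hr.1⟩
    have hle : sn ≤ ‖t • y‖ := by
      rw [hsn]; exact csInf_le hbdd hr
    have : ‖t • y‖ ≤ ‖y‖ := by
      rw [norm_smul]
      have : ‖t‖ ≤ 1 := by
        rw [Real.norm_eq_abs, abs_of_nonneg ht.1]; exact ht.2
      nlinarith [norm_nonneg y]
    linarith
  -- clamp formulas for tn and rn
  have htn : ∀ x : EuclideanSpace ℝ (Fin d), tn x = max 0 (min 1 (sn - ‖x‖)) := by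
    intro x
    rcases le_or_gt ‖x‖ (sn - 1) with h | h
    · rw [htn1 x h]
      rw [min_eq_left (by linarith), max_eq_right (by linarith)]
    · rcases lt_or_ge ‖x‖ sn with h2 | h2
      · rw [htn2 x h h2]
        rw [min_eq_right (by linarith), max_eq_right (by linarith)]
      · rw [htn3 x h2]
        rw [min_eq_right (by linarith), max_eq_left (by linarith)]
  have hrn : ∀ x : EuclideanSpace ℝ (Fin d), rn x = max 0 (min 1 (‖x‖ - sn + 2)) := by
    intro x
    rcases le_or_gt ‖x‖ (sn - 2) with h | h
    · rw [hrn1 x h]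
      rw [min_eq_right (by linarith), max_eq_left (by linarith)]
    · rcases lt_or_ge ‖x‖ (sn - 1) with h2 | h2
      · rw [hrn2 x h h2]
        rw [min_eq_right (by linarith), max_eq_right (by linarith)]
      · rw [hrn3 x h2]
        rw [min_eq_left (by linarith), max_eq_right (by linarith)]
  -- main claim: fn is monotone, assuming ‖y‖ ≤ ‖x‖
  have claim : ∀ x y : EuclideanSpace ℝ (Fin d), ‖y‖ ≤ ‖x‖ →
      0 ≤ ⟪fn x - fn y, x - y⟫ := by
    intro x y hxy
    have hdecomp : fn x - fn y = tn x • (f x - f y) + (tn x - tn y) • f y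
        + (N * rn y) • (x - y) + (N * (rn x - rn y)) • x := by
      rw [hfn, hfn]; module
    rw [hdecomp, inner_add_left, inner_add_left, inner_add_left,
      real_inner_smul_left, real_inner_smul_left, real_inner_smul_left,
      real_inner_smul_left, real_inner_self_eq_norm_sq]
    -- notation
    set a := ‖x‖
    set c := ‖y‖
    set u := ‖x - y‖
    have htx0 : 0 ≤ tn x := by rw [htn]; exact clamp_nonneg _
    have htx1 : tn x ≤ 1 := by rw [htn]; exact clamp_le_one _
    have hty1 : tn y ≤ 1 := by rw [htn]; exact clamp_le_one _
    have hrx0 : 0 ≤ rn x := by rw [hrn]; exact clamp_nonneg _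
    have hry0 : 0 ≤ rn y := by rw [hrn]; exact clamp_nonneg _
    have hry1 : rn y ≤ 1 := by rw [hrn]; exact clamp_le_one _
    have htmono : tn x ≤ tn y := by
      rw [htn, htn]; exact clamp_mono (by linarith)
    have htlip : tn y - tn x ≤ a - c := by
      rw [htn, htn]
      have := clamp_lip (s := sn - a) (t := sn - c) (by linarith)
      linarith
    have hrmono : rn y ≤ rn x := by
      rw [hrn, hrn]; exact clamp_mono (by linarith)
    have hac : a - c ≤ u := norm_sub_norm_le x y
    have hxu : ⟪x, x - y⟫ ≥ a * (a - c) := by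
      rw [inner_sub_right, real_inner_self_eq_norm_sq]
      have := real_inner_le_norm x y
      nlinarith
    have hT1 : 0 ≤ tn x * ⟪f x - f y, x - y⟫ :=
      mul_nonneg htx0 (hfmono x y)
    rcases eq_or_lt_of_le htmono with heq | hlt
    · -- tn x = tn y : every term nonnegative
      rw [heq]
      have h4 : 0 ≤ N * (rn x - rn y) * ⟪x, x - y⟫ := by
        apply mul_nonneg (mul_nonneg hNpos.le (by linarith))
        nlinarith [norm_nonneg x]
      have h3 : 0 ≤ N * rn y * u ^ 2 := by positivity
      rw [heq] at hT1
      linarith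
    · -- tn x < tn y : the interesting case
      have hxgt : sn - 1 < a := by
        by_contra hcon
        push_neg at hcon
        have := htn1 x hcon
        linarith [this ▸ hty1, htx1, this]
      have hrnx : rn x = 1 := hrn3 x hxgt.le
      have hylt : c < sn := by
        by_contra hcon
        push_neg at hcon
        have h0 := htn3 x (by linarith : sn ≤ a)
        have h0' := htn3 y hcon
        rw [h0, h0'] at hlt
        exact lt_irrefl _ hlt
      have hfyb : ‖f y‖ ≤ N := hkey y hylt
      have hu0 : 0 ≤ u := norm_nonneg _
      have ha0 : 0 ≤ a := norm_nonneg _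
      have hP1 : ⟪f y, x - y⟫ ≤ N * u := by
        have h1 : ⟪f y, x - y⟫ ≤ ‖f y‖ * u := real_inner_le_norm _ _
        have h2 : ‖f y‖ * u ≤ N * u := mul_le_mul_of_nonneg_right hfyb hu0
        linarith
      have hP2 : ⟪f y, x - y⟫ ≤ N * a := by
        rw [inner_sub_right]
        have h1 : ⟪f y, x⟫ ≤ ‖f y‖ * a := real_inner_le_norm _ _
        have h2 : ‖f y‖ * a ≤ N * a := mul_le_mul_of_nonneg_right hfyb ha0
        have h3 := hfyy y
        linarith
      set D := tn y - tn x with hD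
      have hDpos : 0 < D := by simp [hD]; linarith
      have hD1 : D ≤ 1 := by simp [hD]; linarith
      have hDu : D ≤ u := le_trans htlip hac
      -- T2 ≥ -D * (rn y * N * u + (1 - rn y) * N * a)
      have hT2 : (tn x - tn y) * ⟪f y, x - y⟫
          ≥ -(D * (rn y * (N * u) + (1 - rn y) * (N * a))) := by
        have hconv : ⟪f y, x - y⟫ ≤ rn y * (N * u) + (1 - rn y) * (N * a) := by
          nlinarith [mul_nonneg hry0 (sub_nonneg.mpr hP1), mul_nonneg (by linarith : (0:ℝ) ≤ 1 - rn y) (sub_nonneg.mpr hP2)]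
        have h1 : D * ⟪f y, x - y⟫ ≤ D * (rn y * (N * u) + (1 - rn y) * (N * a)) :=
          mul_le_mul_of_nonneg_left hconv hDpos.le
        have h2 : (tn x - tn y) * ⟪f y, x - y⟫ = -(D * ⟪f y, x - y⟫) := by
          rw [hD]; ring
        linarith
      have hT3 : N * rn y * u ^ 2 ≥ D * (rn y * (N * u)) := by
        nlinarith [mul_nonneg (mul_nonneg (mul_nonneg hNpos.le hry0) hu0) (sub_nonneg.mpr hDu)]
      have hT4 : N * (rn x - rn y) * ⟪x, x - y⟫ ≥ D * ((1 - rn y) * (N * a)) := by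
        rw [hrnx]
        have h1 : ⟪x, x - y⟫ ≥ a * D := by nlinarith [mul_nonneg ha0 (by linarith : (0:ℝ) ≤ (a - c) - D)]
        nlinarith [mul_nonneg (mul_nonneg hNpos.le (by linarith : (0:ℝ) ≤ 1 - rn y)) (by linarith : (0:ℝ) ≤ ⟪x, x - y⟫ - a * D)]
      linarith
  -- conclude
  intro x y
  have hfnmono : 0 ≤ ⟪fn x - fn y, x - y⟫ := by
    rcases le_total ‖y‖ ‖x‖ with h | h
    · exact claim x y h
    · have := claim y x h
      rwa [show fn y - fn x = -(fn x - fn y) by abel,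
        show y - x = -(x - y) by abel, inner_neg_neg] at this
  have hbd : bn x - bn y = -(L • (x - y)) - (fn x - fn y) := by
    rw [hbn, hbn]; module
  rw [hbd, inner_sub_left, inner_neg_left, real_inner_smul_left,
    real_inner_self_eq_norm_sq]
  nlinarith
end

section
/- For all x ∈ ℝ^d one has the linear growth bound ‖b_n(x)‖ ≤ (‖b(0)‖ + L + 1) n^α (1 + ‖x‖). -/
open scoped RealInnerProductSpace

theorem bn_linear_growth
    {{d : ℕ}} (hd : 1 ≤ d)
    (b : EuclideanSpace ℝ (Fin d) → EuclideanSpace ℝ (Fin d)) (L : ℝ)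
    (hb : Continuous b) (hL : 0 < L)
    (hmono : ∀ x y : EuclideanSpace ℝ (Fin d),
      ⟪b x - b y, x - y⟫ ≤ -L * ‖x - y‖ ^ 2)
    (f : EuclideanSpace ℝ (Fin d) → EuclideanSpace ℝ (Fin d))
    (hf : ∀ x, f x = b 0 - b x - L • x)
    (α : ℝ) (hα : α ∈ Set.Ioc (0 : ℝ) (1 / 2)) (n : ℕ) (hn : 1 ≤ n)
    (sn : ℝ)
    (hsn : sn = sInf {r : ℝ | 0 ≤ r ∧
      ∃ x : EuclideanSpace ℝ (Fin d), ‖x‖ = r ∧ ‖f x‖ = (n : ℝ) ^ α})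
    (hsn2 : 2 < sn)
    (tn rn : EuclideanSpace ℝ (Fin d) → ℝ)
    (htn1 : ∀ x : EuclideanSpace ℝ (Fin d), ‖x‖ ≤ sn - 1 → tn x = 1)
    (htn2 : ∀ x : EuclideanSpace ℝ (Fin d), sn - 1 < ‖x‖ → ‖x‖ < sn → tn x = sn - ‖x‖)
    (htn3 : ∀ x : EuclideanSpace ℝ (Fin d), sn ≤ ‖x‖ → tn x = 0)
    (hrn1 : ∀ x : EuclideanSpace ℝ (Fin d), ‖x‖ ≤ sn - 2 → rn x = 0)
    (hrn2 : ∀ x : EuclideanSpace ℝ (Fin d), sn - 2 < ‖x‖ → ‖x‖ < sn - 1 → rn x = ‖x‖ - sn + 2)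
    (hrn3 : ∀ x : EuclideanSpace ℝ (Fin d), sn - 1 ≤ ‖x‖ → rn x = 1)
    (fn bn : EuclideanSpace ℝ (Fin d) → EuclideanSpace ℝ (Fin d))
    (hfn : ∀ x, fn x = tn x • f x + ((n : ℝ) ^ α * rn x) • x)
    (hbn : ∀ x, bn x = b 0 - L • x - fn x) :
    ∀ x : EuclideanSpace ℝ (Fin d), ‖bn x‖ ≤ (‖b 0‖ + L + 1) * (n : ℝ) ^ α * (1 + ‖x‖) := by

  have hnα : (1:ℝ) ≤ (n:ℝ) ^ α := Real.one_le_rpow (by exact_mod_cast hn) hα.1.le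
  have hnα0 : (0:ℝ) ≤ (n:ℝ) ^ α := by linarith
  have hfc : Continuous f := by
    have : f = fun x => b 0 - b x - L • x := funext hf
    rw [this]; fun_prop
  have hf0 : f 0 = 0 := by simp [hf]
  have hkey : ∀ x : EuclideanSpace ℝ (Fin d), ‖x‖ < sn → ‖f x‖ ≤ (n : ℝ) ^ α := by
    intro x hx
    by_contra h
    push_neg at h
    have hcont : ContinuousOn (fun t : ℝ => ‖f (t • x)‖) (Set.Icc 0 1) :=
      ((hfc.comp (continuous_id.smul continuous_const)).norm).continuousOn
    have h0 : (fun t : ℝ => ‖f (t • x)‖) 0 = 0 := by simp [hf0]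
    have hiv := intermediate_value_Icc (zero_le_one) hcont
    have hmem : (n : ℝ) ^ α ∈ Set.Icc ((fun t : ℝ => ‖f (t • x)‖) 0) ((fun t : ℝ => ‖f (t • x)‖) 1) := by
      simp only [h0, one_smul]
      exact ⟨hnα0, h.le⟩
    obtain ⟨t, ht, hteq⟩ := hiv hmem
    have hset : ‖t • x‖ ∈ {r : ℝ | 0 ≤ r ∧
        ∃ y : EuclideanSpace ℝ (Fin d), ‖y‖ = r ∧ ‖f y‖ = (n : ℝ) ^ α} :=
      ⟨norm_nonneg _, t • x, rfl, hteq⟩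
    have hbdd : BddBelow {r : ℝ | 0 ≤ r ∧
        ∃ y : EuclideanSpace ℝ (Fin d), ‖y‖ = r ∧ ‖f y‖ = (n : ℝ) ^ α} :=
      ⟨0, fun r hr => hr.1⟩
    have hle : sn ≤ ‖t • x‖ := hsn ▸ csInf_le hbdd hset
    have htx : ‖t • x‖ ≤ ‖x‖ := by
      rw [norm_smul]
      have : |t| ≤ 1 := abs_le.2 ⟨by linarith [ht.1], ht.2⟩
      calc ‖t‖ * ‖x‖ ≤ 1 * ‖x‖ := by
            apply mul_le_mul_of_nonneg_right _ (norm_nonneg x)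
            simpa [Real.norm_eq_abs] using this
        _ = ‖x‖ := one_mul _
    linarith
  have htn_nonneg : ∀ x, 0 ≤ tn x ∧ tn x ≤ 1 := by
    intro x
    rcases le_or_gt ‖x‖ (sn - 1) with h1 | h1
    · rw [htn1 x h1]; exact ⟨zero_le_one, le_refl 1⟩
    rcases lt_or_ge ‖x‖ sn with h2 | h2
    · rw [htn2 x h1 h2]; constructor <;> linarith
    · rw [htn3 x h2]; exact ⟨le_refl 0, zero_le_one⟩
  have hrn_nonneg : ∀ x, 0 ≤ rn x ∧ rn x ≤ 1 := by
    intro x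
    rcases le_or_gt ‖x‖ (sn - 2) with h1 | h1
    · rw [hrn1 x h1]; exact ⟨le_refl 0, zero_le_one⟩
    rcases lt_or_ge ‖x‖ (sn - 1) with h2 | h2
    · rw [hrn2 x h1 h2]; constructor <;> linarith
    · rw [hrn3 x h2]; exact ⟨zero_le_one, le_refl 1⟩
  have htf : ∀ x, ‖tn x • f x‖ ≤ (n : ℝ) ^ α := by
    intro x
    rcases lt_or_ge ‖x‖ sn with h1 | h1
    · rw [norm_smul]
      have h2 := hkey x h1
      have h3 := htn_nonneg x
      calc ‖tn x‖ * ‖f x‖ ≤ 1 * ((n:ℝ)^α) := by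
            apply mul_le_mul _ h2 (norm_nonneg _) zero_le_one
            simpa [Real.norm_eq_abs, abs_of_nonneg h3.1] using h3.2
        _ = (n:ℝ)^α := one_mul _
    · rw [htn3 x h1]; simpa using hnα0
  intro x
  rw [hbn, hfn]
  have hrx : ‖((n : ℝ) ^ α * rn x) • x‖ ≤ (n:ℝ)^α * ‖x‖ := by
    rw [norm_smul]
    have h3 := hrn_nonneg x
    have : ‖(n : ℝ) ^ α * rn x‖ ≤ (n:ℝ)^α := by
      rw [Real.norm_eq_abs, abs_of_nonneg (mul_nonneg hnα0 h3.1)]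
      nlinarith [h3.2]
    exact mul_le_mul_of_nonneg_right this (norm_nonneg x) |>.trans_eq rfl
  have e1 : ‖b 0 - L • x - (tn x • f x + ((n : ℝ) ^ α * rn x) • x)‖
      ≤ ‖b 0‖ + ‖L • x‖ + (‖tn x • f x‖ + ‖((n : ℝ) ^ α * rn x) • x‖) := by
    calc ‖b 0 - L • x - (tn x • f x + ((n : ℝ) ^ α * rn x) • x)‖
        ≤ ‖b 0 - L • x‖ + ‖tn x • f x + ((n : ℝ) ^ α * rn x) • x‖ := norm_sub_le _ _
      _ ≤ (‖b 0‖ + ‖L • x‖) + (‖tn x • f x‖ + ‖((n : ℝ) ^ α * rn x) • x‖) := by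
          gcongr
          · exact norm_sub_le _ _
          · exact norm_add_le _ _
  have hLx : ‖L • x‖ = L * ‖x‖ := by
    rw [norm_smul, Real.norm_eq_abs, abs_of_pos hL]
  have hb0 : (0:ℝ) ≤ ‖b 0‖ := norm_nonneg _
  have hxnn : (0:ℝ) ≤ ‖x‖ := norm_nonneg _
  have h4 := htf x
  nlinarith [e1, hrx, hLx, mul_nonneg hb0 (by linarith : (0:ℝ) ≤ (n:ℝ)^α - 1),
    mul_nonneg (mul_nonneg hL.le hxnn) (by linarith : (0:ℝ) ≤ (n:ℝ)^α - 1),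
    mul_nonneg (mul_nonneg hb0 hnα0) hxnn, mul_nonneg hL.le hnα0]
end

section
/- Let f : ℝ^d → ℝ^d be continuous and let Ω_1, …, Ω_k ⊆ ℝ^d be subsets with ⋃_{i=1}^k Ω_i = ℝ^d such that the topological boundary ∂Ω_i of each Ω_i is contained in a finite union of spheres (sets of the form {x ∈ ℝ^d : ‖x − c‖ = ρ} with c ∈ ℝ^d, ρ > 0). Suppose that for each i = 1, …, k one has ⟨f(x) − f(y), x − y⟩ ≥ 0 for all x, y ∈ Ω_i. Then ⟨f(x) − f(y), x − y⟩ ≥ 0 for all x, y ∈ ℝ^d. -/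
/-!
Along the segment `t ↦ y + t • (x - y)` the claim reads `g 0 ≤ g 1` for the continuous function
`g t = ⟪f (y + t • (x - y)), x - y⟫`. The segment meets each sphere, hence the frontiers of the
`Ω i`, at finitely many parameters; every other point of it lies in the interior of some `Ω i`,
where monotonicity of `f` makes `g` locally nondecreasing. A continuous real function which is
locally nondecreasing to the right of every point outside a finite set is monotone: continuous
induction away from the finite set, and continuity to cross its points.
-/

open scoped RealInnerProductSpace
open Set Filter Topology

section ContinuousInduction

variable {α β : Type*} [ConditionallyCompleteLinearOrder α] [TopologicalSpace α] [OrderTopology α]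
  [DenselyOrdered α] [LinearOrder β] [TopologicalSpace β] [OrderClosedTopology β] {g : α → β}

theorem monotoneOn_of_forall_eventually_le_nhdsGT {I : Set α} (hI : I.OrdConnected)
    (hg : ContinuousOn g I) (hloc : ∀ t ∈ I, ∀ᶠ w in 𝓝[>] t, g t ≤ g w) : MonotoneOn g I := by
  intro u hu v hv huv
  have hsub : Icc u v ⊆ I := hI.out hu hv
  have hclosed : IsClosed ({w | g u ≤ g w} ∩ Icc u v) := by
    rw [inter_comm]
    exact (hg.mono hsub).preimage_isClosed_of_isClosed isClosed_Icc isClosed_Ici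
  refine hclosed.Icc_subset_of_forall_mem_nhdsWithin le_rfl ?_ ⟨huv, le_rfl⟩
  rintro t ⟨hut, htI⟩
  filter_upwards [hloc t (hsub (Ico_subset_Icc_self htI))] with w hw using hut.trans hw

theorem monotone_of_forall_notMem_eventually_le_nhdsGT [NoMaxOrder α] {S : Set α}
    (hS : S.Finite) (hg : Continuous g) (hloc : ∀ t ∉ S, ∀ᶠ w in 𝓝[>] t, g t ≤ g w) :
    Monotone g := by
  refine monotoneOn_univ.1 <| monotoneOn_of_forall_eventually_le_nhdsGT ordConnected_univ
    hg.continuousOn fun t _ ↦ ?_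
  have hS_nhdsNE : Sᶜ ∈ 𝓝[≠] t := by
    simpa using disjoint_principal_right.1 (mem_codiscrete.1 hS.compl_mem_codiscrete t)
  obtain ⟨c, htc, hc⟩ := (mem_nhdsGT_iff_exists_Ioo_subset).1 (nhdsGT_le_nhdsNE t hS_nhdsNE)
  have hmono : MonotoneOn g (Ioo t c) := monotoneOn_of_forall_eventually_le_nhdsGT
    ordConnected_Ioo hg.continuousOn fun w hw ↦ hloc w (hc hw)
  filter_upwards [Ioo_mem_nhdsGT htc] with w hw
  -- `g t` is the right limit of `g`, and `g ≤ g w` on `(t, w)`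
  refine le_of_tendsto ((hg.tendsto t).mono_left (nhdsWithin_le_nhds (s := Ioi t))) ?_
  filter_upwards [Ioo_mem_nhdsGT hw.1] with w' hw'
  exact hmono ⟨hw'.1, hw'.2.trans hw.2⟩ hw hw'.2.le

end ContinuousInduction

section InnerProductSpace

variable {E : Type*} [NormedAddCommGroup E] [InnerProductSpace ℝ E]

open Polynomial in
theorem finite_setOf_add_smul_mem_sphere (x : E) {v : E} (hv : v ≠ 0) (c : E) (ρ : ℝ) :
    {t : ℝ | x + t • v ∈ Metric.sphere c ρ}.Finite := by
  let P : ℝ[X] := C (‖v‖ ^ 2) * X ^ 2 + C (2 * ⟪x - c, v⟫) * X + C (‖x - c‖ ^ 2 - ρ ^ 2)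
  have hP : P ≠ 0 := fun h ↦ by
    have h2 := congrArg (coeff · 2) h
    simp only [P, coeff_add, coeff_C_mul, coeff_X_pow, coeff_X, coeff_C, coeff_zero] at h2
    norm_num at h2
    exact hv h2
  refine (finite_setOfPred_isRoot hP).subset fun t ht ↦ ?_
  have hsq : ‖(x - c) + t • v‖ ^ 2 = ρ ^ 2 := by
    rw [← mem_sphere_iff_norm.1 ht]; congr 2; abel
  rw [norm_add_sq_real, real_inner_smul_right, norm_smul, mul_pow, Real.norm_eq_abs, sq_abs] at hsq
  simp only [P, mem_ofPred_eq, IsRoot, eval_add, eval_mul, eval_C, eval_pow, eval_X]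
  linear_combination hsq

theorem inner_sub_sub_nonneg_of_eventually_nhds {f : E → E} (hf : Continuous f) {Z : Set E}
    {x y : E} (hZ : {t : ℝ | y + t • (x - y) ∈ Z}.Finite)
    (hloc : ∀ z ∉ Z, ∀ᶠ a in 𝓝 z, 0 ≤ ⟪f a - f z, a - z⟫) :
    0 ≤ ⟪f x - f y, x - y⟫ := by
  set p : ℝ → E := fun t ↦ y + t • (x - y)
  have hp : Continuous p := by fun_prop
  have hmono : Monotone fun t ↦ ⟪f (p t), x - y⟫ := by
    refine monotone_of_forall_notMem_eventually_le_nhdsGT hZ (by fun_prop) fun t ht ↦ ?_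
    filter_upwards [nhdsWithin_le_nhds ((hp.tendsto t).eventually (hloc (p t) ht)),
      self_mem_nhdsWithin] with w hw (htw : t < w)
    have hpw : p w - p t = (w - t) • (x - y) := by simp only [p]; module
    rw [hpw, real_inner_smul_right, inner_sub_left] at hw
    exact sub_nonneg.1 (nonneg_of_mul_nonneg_right hw (sub_pos.2 htw))
  simpa [p, inner_sub_left] using hmono zero_le_one

theorem eventually_inner_sub_sub_nonneg_of_notMem_frontier {ι : Type*} {f : E → E} {Ω : ι → Set E}
    (hcover : ⋃ i, Ω i = univ) (hlocal : ∀ i, ∀ x ∈ Ω i, ∀ y ∈ Ω i, 0 ≤ ⟪f x - f y, x - y⟫)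
    {z : E} (hz : z ∉ ⋃ i, frontier (Ω i)) : ∀ᶠ a in 𝓝 z, 0 ≤ ⟪f a - f z, a - z⟫ := by
  obtain ⟨i, hi⟩ := mem_iUnion.1 (hcover.symm ▸ mem_univ z)
  have hint : z ∈ interior (Ω i) := by
    rw [← self_sdiff_frontier]
    exact ⟨hi, fun h ↦ hz (mem_iUnion.2 ⟨i, h⟩)⟩
  filter_upwards [mem_interior_iff_mem_nhds.1 hint] with a ha using hlocal i a ha z hi

end InnerProductSpace

theorem local_monotonicity_implies_global_general
    {d : ℕ}
    (f : EuclideanSpace ℝ (Fin d) → EuclideanSpace ℝ (Fin d)) (hf : Continuous f)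
    (k : ℕ) (Ω : Fin k → Set (EuclideanSpace ℝ (Fin d)))
    (hcover : (⋃ i, Ω i) = Set.univ)
    (hboundary : ∀ i : Fin k, ∃ (m : ℕ) (c : Fin m → EuclideanSpace ℝ (Fin d)) (ρ : Fin m → ℝ),
      (∀ j, 0 < ρ j) ∧ frontier (Ω i) ⊆ ⋃ j, Metric.sphere (c j) (ρ j))
    (hlocal : ∀ i : Fin k, ∀ x ∈ Ω i, ∀ y ∈ Ω i, 0 ≤ ⟪f x - f y, x - y⟫) :
    ∀ x y : EuclideanSpace ℝ (Fin d), 0 ≤ ⟪f x - f y, x - y⟫ := by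
  intro x y
  rcases eq_or_ne x y with rfl | hxy
  · simp
  choose m c ρ _ hfrontier using hboundary
  refine inner_sub_sub_nonneg_of_eventually_nhds hf ?_
    fun z ↦ eventually_inner_sub_sub_nonneg_of_notMem_frontier hcover hlocal
  have hline : ∀ i j, {t : ℝ | y + t • (x - y) ∈ Metric.sphere (c i j) (ρ i j)}.Finite :=
    fun i j ↦ finite_setOf_add_smul_mem_sphere y (sub_ne_zero.2 hxy) (c i j) (ρ i j)
  refine (finite_iUnion fun i ↦ finite_iUnion (hline i)).subset fun t ht ↦ ?_
  obtain ⟨i, hi⟩ := mem_iUnion.1 ht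
  obtain ⟨j, hj⟩ := mem_iUnion.1 (hfrontier i hi)
  exact mem_iUnion₂.2 ⟨i, j, hj⟩

theorem local_monotonicity_implies_global
    {d : ℕ} (hd : 1 ≤ d)
    (f : EuclideanSpace ℝ (Fin d) → EuclideanSpace ℝ (Fin d)) (hf : Continuous f)
    (k : ℕ) (Ω : Fin k → Set (EuclideanSpace ℝ (Fin d)))
    (hcover : (⋃ i, Ω i) = Set.univ)
    (hboundary : ∀ i : Fin k, ∃ (m : ℕ) (c : Fin m → EuclideanSpace ℝ (Fin d)) (ρ : Fin m → ℝ),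
      (∀ j, 0 < ρ j) ∧ frontier (Ω i) ⊆ ⋃ j, Metric.sphere (c j) (ρ j))
    (hlocal : ∀ i : Fin k, ∀ x ∈ Ω i, ∀ y ∈ Ω i, 0 ≤ ⟪f x - f y, x - y⟫) :
    ∀ x y : EuclideanSpace ℝ (Fin d), 0 ≤ ⟪f x - f y, x - y⟫ :=
  local_monotonicity_implies_global_general f hf k Ω hcover hboundary hlocal
end

section
/- There exists a constant C > 0, independent of n, such that for every integer n ≥ 1 for which s_n > 2 one has s_n − 2 ≥ C n^{α/(l+1)}. -/
open scoped RealInnerProductSpace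

theorem sn_lower_bound
    {d : ℕ} (hd : 1 ≤ d)
    (b : EuclideanSpace ℝ (Fin d) → EuclideanSpace ℝ (Fin d)) (L : ℝ)
    (hb : Continuous b) (hL : 0 < L)
    (hmono : ∀ x y : EuclideanSpace ℝ (Fin d),
      ⟪b x - b y, x - y⟫ ≤ -L * ‖x - y‖ ^ 2)
    (f : EuclideanSpace ℝ (Fin d) → EuclideanSpace ℝ (Fin d))
    (hf : ∀ x, f x = b 0 - b x - L • x)
    (α : ℝ) (hα : α ∈ Set.Ioc (0 : ℝ) (1 / 2))
    (sn : ℕ → ℝ)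
    (hsn : ∀ n : ℕ, sn n = sInf {r : ℝ | 0 ≤ r ∧
      ∃ x : EuclideanSpace ℝ (Fin d), ‖x‖ = r ∧ ‖f x‖ = (n : ℝ) ^ α})
    (H l : ℝ) (hH : 0 < H) (hl : 0 < l)
    (hA3 : ∀ x y : EuclideanSpace ℝ (Fin d),
      ‖b x - b y‖ ≤ H * (1 + ‖x‖ + ‖y‖) ^ l * ‖x - y‖) :
    ∃ C : ℝ, 0 < C ∧ ∀ n : ℕ, 1 ≤ n → 2 < sn n →
      C * (n : ℝ) ^ (α / (l + 1)) ≤ sn n - 2 := by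
  classical
  obtain ⟨hα0, hα2⟩ := hα
  have hl1 : (0:ℝ) < l + 1 := by linarith
  have hβ : 0 < α / (l + 1) := div_pos hα0 hl1
  have hHL : 0 < H + L := by linarith
  have hc : 0 < ((H + L) ^ (1 / (l + 1)) : ℝ)⁻¹ :=
    inv_pos.mpr (Real.rpow_pos_of_pos hHL _)
  set c : ℝ := ((H + L) ^ (1 / (l + 1)) : ℝ)⁻¹ with hcdef
  -- Key analytic estimate
  have keyA : ∀ n : ℕ, 2 < sn n → c * (n:ℝ) ^ (α / (l + 1)) ≤ sn n + 1 := by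
    intro n hn2
    have hsnS := hsn n
    set S := {r : ℝ | 0 ≤ r ∧
      ∃ x : EuclideanSpace ℝ (Fin d), ‖x‖ = r ∧ ‖f x‖ = (n : ℝ) ^ α} with hSdef
    have hSne : S.Nonempty := by
      by_contra h
      rw [Set.not_nonempty_iff_eq_empty] at h
      rw [hsnS, h, Real.sInf_empty] at hn2
      linarith
    have hlb : ∀ r ∈ S, c * (n:ℝ) ^ (α / (l + 1)) - 1 ≤ r := by
      rintro r ⟨hr0, x, hxr, hfx⟩
      have h1r : (1:ℝ) ≤ 1 + r := by linarith
      have h1r0 : (0:ℝ) < 1 + r := by linarith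
      have hb0 : ‖b x - b 0‖ ≤ H * (1 + ‖x‖) ^ l * ‖x‖ := by
        have := hA3 x 0
        simpa using this
      have hfxle : ‖f x‖ ≤ H * (1 + r) ^ l * r + L * r := by
        rw [hf]
        calc ‖b 0 - b x - L • x‖ ≤ ‖b 0 - b x‖ + ‖L • x‖ := norm_sub_le _ _
          _ = ‖b x - b 0‖ + L * ‖x‖ := by
              rw [norm_sub_rev, norm_smul, Real.norm_of_nonneg hL.le]
          _ ≤ H * (1 + ‖x‖) ^ l * ‖x‖ + L * ‖x‖ := by linarith
          _ = H * (1 + r) ^ l * r + L * r := by rw [hxr]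
      have hpl : 0 < (1 + r) ^ l := Real.rpow_pos_of_pos h1r0 l
      have h1 : (1 + r) ≤ (1 + r) ^ (l + 1) := by
        nth_rewrite 1 [← Real.rpow_one (1 + r)]
        exact Real.rpow_le_rpow_of_exponent_le h1r (by linarith)
      have h2 : (1 + r) ^ l * (1 + r) = (1 + r) ^ (l + 1) :=
        (Real.rpow_add_one h1r0.ne' l).symm
      have hrle : r ≤ 1 + r := by linarith
      have hpow : (n:ℝ) ^ α ≤ (H + L) * (1 + r) ^ (l + 1) := by
        have e1 : H * (1 + r) ^ l * r ≤ H * (1 + r) ^ l * (1 + r) :=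
          mul_le_mul_of_nonneg_left hrle (mul_nonneg hH.le hpl.le)
        have e2 : L * r ≤ L * ((1 + r) ^ (l + 1)) :=
          mul_le_mul_of_nonneg_left (hrle.trans h1) hL.le
        have e3 : H * (1 + r) ^ l * (1 + r) = H * (1 + r) ^ (l + 1) := by
          rw [mul_assoc, h2]
        calc (n:ℝ) ^ α = ‖f x‖ := hfx.symm
          _ ≤ H * (1 + r) ^ l * r + L * r := hfxle
          _ ≤ H * (1 + r) ^ (l + 1) + L * ((1 + r) ^ (l + 1)) := by
              rw [← e3]; linarith
          _ = (H + L) * (1 + r) ^ (l + 1) := by ring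
      have hna : (0:ℝ) ≤ (n:ℝ) ^ α := Real.rpow_nonneg (Nat.cast_nonneg n) α
      have hdiv : (n:ℝ) ^ α / (H + L) ≤ (1 + r) ^ (l + 1) :=
        (div_le_iff₀ hHL).mpr (by linarith)
      have hmono' := Real.rpow_le_rpow (by positivity) hdiv
        (by positivity : (0:ℝ) ≤ 1 / (l + 1))
      have hR : ((1 + r) ^ (l + 1)) ^ (1 / (l + 1)) = 1 + r := by
        rw [← Real.rpow_mul h1r0.le, mul_one_div, div_self hl1.ne', Real.rpow_one]
      have hLft : ((n:ℝ) ^ α / (H + L)) ^ (1 / (l + 1))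
          = (n:ℝ) ^ (α / (l + 1)) * c := by
        rw [Real.div_rpow hna hHL.le, ← Real.rpow_mul (Nat.cast_nonneg n),
          mul_one_div, div_eq_mul_inv]
      rw [hR, hLft] at hmono'
      linarith
    have := le_csInf hSne hlb
    rw [← hsnS] at this
    linarith
  set N := Nat.ceil ((6 / c) ^ ((α / (l + 1))⁻¹)) with hN
  set T := (Finset.Icc 1 N).filter (fun m => 2 < sn m) with hT
  have hbig : ∀ n : ℕ, 1 ≤ n → 2 < sn n → 6 ≤ c * (n:ℝ) ^ (α / (l + 1)) →
      c / 2 * (n:ℝ) ^ (α / (l + 1)) ≤ sn n - 2 := by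
    intro n hn1 hn2 h6
    have := keyA n hn2
    nlinarith
  have hmem : ∀ n : ℕ, 1 ≤ n → 2 < sn n → c * (n:ℝ) ^ (α / (l + 1)) < 6 →
      n ∈ T := by
    intro n hn1 hn2 h6
    have hn1' : (1:ℝ) ≤ (n:ℝ) := by exact_mod_cast hn1
    have hnβ0 : (0:ℝ) < (n:ℝ) ^ (α / (l + 1)) :=
      Real.rpow_pos_of_pos (by linarith) _
    rw [hT, Finset.mem_filter, Finset.mem_Icc]
    refine ⟨⟨hn1, ?_⟩, hn2⟩
    have h6c : (n:ℝ) ^ (α / (l + 1)) ≤ 6 / c := by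
      rw [le_div_iff₀ hc]
      nlinarith
    have hle : (n:ℝ) ≤ (6 / c) ^ ((α / (l + 1))⁻¹) := by
      have := Real.rpow_le_rpow hnβ0.le h6c
        (by positivity : (0:ℝ) ≤ (α / (l + 1))⁻¹)
      rwa [← Real.rpow_mul (Nat.cast_nonneg n), mul_inv_cancel₀ hβ.ne',
        Real.rpow_one] at this
    exact_mod_cast hle.trans (Nat.le_ceil _)
  by_cases hTne : T.Nonempty
  · refine ⟨min (c / 2) (c / 6 * T.inf' hTne (fun m => sn m - 2)), ?_, ?_⟩
    · refine lt_min (by positivity) (mul_pos (by positivity) ?_)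
      rw [Finset.lt_inf'_iff]
      intro m hm
      have := (Finset.mem_filter.mp hm).2
      linarith
    · intro n hn1 hn2
      have hn1' : (1:ℝ) ≤ (n:ℝ) := by exact_mod_cast hn1
      have hnβ0 : (0:ℝ) < (n:ℝ) ^ (α / (l + 1)) :=
        Real.rpow_pos_of_pos (by linarith) _
      by_cases hcase : 6 ≤ c * (n:ℝ) ^ (α / (l + 1))
      · calc min (c / 2) (c / 6 * T.inf' hTne (fun m => sn m - 2))
              * (n:ℝ) ^ (α / (l + 1))
            ≤ c / 2 * (n:ℝ) ^ (α / (l + 1)) :=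
              mul_le_mul_of_nonneg_right (min_le_left _ _) hnβ0.le
          _ ≤ sn n - 2 := hbig n hn1 hn2 hcase
      · push_neg at hcase
        have hmemT := hmem n hn1 hn2 hcase
        have hinf : T.inf' hTne (fun m => sn m - 2) ≤ sn n - 2 :=
          Finset.inf'_le _ hmemT
        have hinfpos : 0 < T.inf' hTne (fun m => sn m - 2) := by
          rw [Finset.lt_inf'_iff]
          intro m hm
          have := (Finset.mem_filter.mp hm).2
          linarith
        calc min (c / 2) (c / 6 * T.inf' hTne (fun m => sn m - 2))
              * (n:ℝ) ^ (α / (l + 1))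
            ≤ (c / 6 * (sn n - 2)) * (n:ℝ) ^ (α / (l + 1)) := by
              apply mul_le_mul_of_nonneg_right _ hnβ0.le
              exact (min_le_right _ _).trans
                (mul_le_mul_of_nonneg_left hinf (by positivity))
          _ ≤ sn n - 2 := by nlinarith
  · refine ⟨c / 2, by positivity, ?_⟩
    intro n hn1 hn2
    by_cases hcase : 6 ≤ c * (n:ℝ) ^ (α / (l + 1))
    · exact hbig n hn1 hn2 hcase
    · push_neg at hcase
      exact absurd ⟨n, hmem n hn1 hn2 hcase⟩ hTne
end

section
/- Let Ω ⊆ ℝ^d, let f : ℝ^d → ℝ^d satisfy ⟨f(x) − f(y), x − y⟩ ≥ 0 for all x, y ∈ Ω, let M > 0 satisfy ‖f(x)‖ ≤ M for all x ∈ Ω, and let t : ℝ^d → [0, 1] satisfy |t(x) − t(y)| ≤ |‖x‖ − ‖y‖| for all x, y ∈ Ω. Then the function g(x) := t(x) f(x) + M x satisfies ⟨g(x) − g(y), x − y⟩ ≥ 0 for all x, y ∈ Ω. -/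
open scoped RealInnerProductSpace

theorem perturbed_monotone
    {d : ℕ} (hd : 1 ≤ d)
    (S : Set (EuclideanSpace ℝ (Fin d)))
    (f : EuclideanSpace ℝ (Fin d) → EuclideanSpace ℝ (Fin d))
    (hf : ∀ x ∈ S, ∀ y ∈ S, 0 ≤ ⟪f x - f y, x - y⟫)
    (M : ℝ) (hM : 0 < M) (hfM : ∀ x ∈ S, ‖f x‖ ≤ M)
    (t : EuclideanSpace ℝ (Fin d) → ℝ)
    (ht01 : ∀ x : EuclideanSpace ℝ (Fin d), t x ∈ Set.Icc (0 : ℝ) 1)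
    (htLip : ∀ x ∈ S, ∀ y ∈ S, |t x - t y| ≤ |‖x‖ - ‖y‖|)
    (g : EuclideanSpace ℝ (Fin d) → EuclideanSpace ℝ (Fin d))
    (hg : ∀ x, g x = t x • f x + M • x) :
    ∀ x ∈ S, ∀ y ∈ S, 0 ≤ ⟪g x - g y, x - y⟫ := by
  intro x hx y hy
  have h1 : g x - g y = (t x) • (f x - f y) + (t x - t y) • f y + M • (x - y) := by
    rw [hg, hg]; module
  rw [h1, inner_add_left, inner_add_left, real_inner_smul_left, real_inner_smul_left,
    real_inner_smul_left, real_inner_self_eq_norm_sq]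
  have h2 : 0 ≤ t x * ⟪f x - f y, x - y⟫ :=
    mul_nonneg (ht01 x).1 (hf x hx y hy)
  have h3 : |(t x - t y) * ⟪f y, x - y⟫| ≤ ‖x - y‖ * (M * ‖x - y‖) := by
    rw [abs_mul]
    apply mul_le_mul
    · exact (htLip x hx y hy).trans ((abs_norm_sub_norm_le x y))
    · exact (abs_real_inner_le_norm _ _).trans
        (mul_le_mul_of_nonneg_right (hfM y hy) (norm_nonneg _))
    · exact abs_nonneg _
    · exact norm_nonneg _
  have h4 := neg_abs_le ((t x - t y) * ⟪f y, x - y⟫)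
  nlinarith [norm_nonneg (x - y)]
end
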